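/- (Sliding axiom of the trace in Rel.) Let f : (S ⊕ X) → (T ⊕ Y) → Prop and u : T → S → Prop be relations. Then trRel (Relation.Comp f (u ⊕ᵣ (Eq : Y → Y → Prop))) = trRel (Relation.Comp (u ⊕ᵣ (Eq : X → X → Prop)) f), where the left-hand trace is over S (of a relation (S ⊕ X) → (S ⊕ Y) → Prop) and the right-hand trace is over T (of a relation (T ⊕ X) → (T ⊕ Y) → Prop). -/

import Mathlib

/-!
Unfolding both composites, each trace is `f_XY` together with the paths through the feedback
loop: on the left these are `(f_XT ; u) ; (f_ST ; u)* ; f_SY`, on the right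
`f_XT ; (u ; f_ST)* ; (u ; f_SY)`. They agree because `u ; (r ; u)* = (u ; r)* ; u`: the
relation `u` slides through the reflexive-transitive closure.
-/

/-- The canonical trace of the monoidal category `(Rel, ⊕, 0)`. -/
def trRel {S X Y : Type*} (f : (S ⊕ X) → (S ⊕ Y) → Prop) : X → Y → Prop :=
  fun x y =>
    f (Sum.inr x) (Sum.inr y) ∨
    ∃ s t, f (Sum.inr x) (Sum.inl s) ∧
      Relation.ReflTransGen (fun s s' => f (Sum.inl s) (Sum.inl s')) s t ∧
      f (Sum.inl t) (Sum.inr y)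

/-- Sum (biproduct) of relations. -/
def sumRel {S T X Y : Type*} (r : S → T → Prop) (q : X → Y → Prop) :
    (S ⊕ X) → (T ⊕ Y) → Prop
  | Sum.inl s, Sum.inl t => r s t
  | Sum.inr x, Sum.inr y => q x y
  | _, _ => False

namespace Relation

variable {α β γ δ : Type*}

theorem comp_reflTransGen_le {u : α → β → Prop} {r : β → β → Prop} {s : α → α → Prop}
    (h : Comp u r ≤ Comp s u) : Comp u (ReflTransGen r) ≤ Comp (ReflTransGen s) u := by
  rintro a b ⟨c, hac, hcb⟩
  induction hcb with
  | refl => exact ⟨a, .refl, hac⟩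
  | tail _ hde ih =>
    obtain ⟨a', haa', ha'd⟩ := ih
    obtain ⟨a'', ha'a'', ha''e⟩ := h _ _ ⟨_, ha'd, hde⟩
    exact ⟨a'', haa'.tail ha'a'', ha''e⟩

theorem reflTransGen_comp_le {u : α → β → Prop} {r : β → β → Prop} {s : α → α → Prop}
    (h : Comp s u ≤ Comp u r) : Comp (ReflTransGen s) u ≤ Comp u (ReflTransGen r) := by
  rintro a b ⟨c, hac, hcb⟩
  induction hac using ReflTransGen.head_induction_on with
  | refl => exact ⟨b, hcb, .refl⟩
  | head has _ ih =>
    obtain ⟨b', hb', hb'b⟩ := ih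
    obtain ⟨b'', hab'', hb''b'⟩ := h _ _ ⟨_, has, hb'⟩
    exact ⟨b'', hab'', hb'b.head hb''b'⟩

theorem comp_reflTransGen_comp_comm (r : α → β → Prop) (u : β → α → Prop) :
    Comp u (ReflTransGen (Comp r u)) = Comp (ReflTransGen (Comp u r)) u :=
  le_antisymm (comp_reflTransGen_le comp_assoc.ge) (reflTransGen_comp_le comp_assoc.le)

theorem comp_comp_reflTransGen_comp_comm (a : γ → β → Prop) (r : α → β → Prop)
    (u : β → α → Prop) (b : α → δ → Prop) :
    Comp (Comp a u) (Comp (ReflTransGen (Comp r u)) b) =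
      Comp a (Comp (ReflTransGen (Comp u r)) (Comp u b)) := by
  rw [comp_assoc, ← comp_assoc (r := u), comp_reflTransGen_comp_comm, comp_assoc]

end Relation

open Relation

theorem trRel_iff {S X Y : Type*} (g : (S ⊕ X) → (S ⊕ Y) → Prop) (x : X) (y : Y) :
    trRel g x y ↔ g (.inr x) (.inr y) ∨
      Comp (fun x s => g (.inr x) (.inl s))
        (Comp (ReflTransGen fun s s' => g (.inl s) (.inl s')) fun t y => g (.inl t) (.inr y))
        x y := by
  simp only [trRel, Comp, exists_and_left]

section sumRel

variable {α S T Y Z : Type*}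

@[simp]
theorem comp_sumRel_inl (f : α → (T ⊕ Y) → Prop) (r : T → S → Prop) (q : Y → Z → Prop)
    (a : α) (s : S) : Comp f (sumRel r q) a (.inl s) ↔ ∃ t, f a (.inl t) ∧ r t s := by
  simp [Comp, sumRel]

@[simp]
theorem comp_sumRel_inr (f : α → (T ⊕ Y) → Prop) (r : T → S → Prop) (q : Y → Z → Prop)
    (a : α) (z : Z) : Comp f (sumRel r q) a (.inr z) ↔ ∃ y, f a (.inr y) ∧ q y z := by
  simp [Comp, sumRel]

@[simp]
theorem sumRel_comp_inl (r : S → T → Prop) (q : Y → Z → Prop) (f : (T ⊕ Z) → α → Prop)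
    (s : S) (a : α) : Comp (sumRel r q) f (.inl s) a ↔ ∃ t, r s t ∧ f (.inl t) a := by
  simp [Comp, sumRel]

@[simp]
theorem sumRel_comp_inr (r : S → T → Prop) (q : Y → Z → Prop) (f : (T ⊕ Z) → α → Prop)
    (y : Y) (a : α) : Comp (sumRel r q) f (.inr y) a ↔ ∃ z, q y z ∧ f (.inr z) a := by
  simp [Comp, sumRel]

end sumRel

theorem trRel_sliding {S T X Y : Type*}
    (f : (S ⊕ X) → (T ⊕ Y) → Prop) (u : T → S → Prop) :
    trRel (Relation.Comp f (sumRel u (Eq : Y → Y → Prop))) =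
      trRel (Relation.Comp (sumRel u (Eq : X → X → Prop)) f) := by
  funext x y
  simp only [trRel_iff, comp_sumRel_inl, comp_sumRel_inr, sumRel_comp_inl, sumRel_comp_inr,
    exists_eq_right, exists_eq_left']
  exact congrArg (f _ _ ∨ ·) (congrFun₂ (comp_comp_reflTransGen_comp_comm _ _ _ _) x y)
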